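/- arXiv:2104.11129 — 4 statements merged into one kernel-verified Lean document; each statement's English description precedes it below -/
import Mathlib

section
/- Let k be a commutative ring. The subring of k[x,y] generated by x+y, xy, and xy^2 is isomorphic to the quotient k[a,b,c]/(b^3 + c^2 - abc), via a ↦ x+y, b ↦ xy, c ↦ xy^2. -/
open MvPolynomial

variable {k : Type} [CommRing k]

lemma C_reg {R : Type*} [CommRing R] {a : R} (ha : ∀ q : R, a * q = 0 → q = 0)
    (p : Polynomial R) (h : Polynomial.C a * p = 0) : p = 0 := by
  ext n
  have h2 : a * p.coeff n = 0 := by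
    have := congrArg (fun q => Polynomial.coeff q n) h
    simpa [Polynomial.coeff_C_mul] using this
  simpa using ha _ h2

lemma X0_reg (p : MvPolynomial (Fin 1) k) (h : X 0 * p = 0) : p = 0 := by
  set e := MvPolynomial.finSuccEquiv k 0 with he
  have h2 : (Polynomial.X : Polynomial (MvPolynomial (Fin 0) k)) * e p = Polynomial.X * 0 := by
    rw [mul_zero]
    have := congrArg e h
    rw [map_mul, map_zero, he, finSuccEquiv_X_zero] at this
    exact this
  have h3 := Polynomial.isRegular_X.left h2
  exact e.injective (by rw [h3, map_zero])

lemma d_reg (p : MvPolynomial (Fin 2) k)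
    (h : (X 0 * X 1 ^ 2 - X 0 ^ 2 * X 1) * p = 0) : p = 0 := by
  set e := MvPolynomial.finSuccEquiv k 1 with he
  have hx1 : e (X 1) = Polynomial.C (X 0) := by
    have h1 : (1 : Fin 2) = Fin.succ 0 := rfl
    rw [he, h1, finSuccEquiv_X_succ]
  have hx0 : e (X 0) = Polynomial.X := by rw [he, finSuccEquiv_X_zero]
  have h2 : Polynomial.X * (Polynomial.C (X 0 : MvPolynomial (Fin 1) k) *
      ((Polynomial.C (X 0) - Polynomial.X) * e p)) = Polynomial.X * 0 := by
    rw [mul_zero]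
    have := congrArg e h
    rw [map_mul, map_zero, map_sub, map_mul, map_mul, map_pow, map_pow, hx0, hx1] at this
    rw [← this]; ring
  have h3 : Polynomial.C (X 0 : MvPolynomial (Fin 1) k) *
      ((Polynomial.C (X 0) - Polynomial.X) * e p) = 0 :=
    Polynomial.isRegular_X.left h2
  have h5 := C_reg (fun q => X0_reg q) _ h3
  have h6 : (Polynomial.X - Polynomial.C (X 0 : MvPolynomial (Fin 1) k)) * e p =
      (Polynomial.X - Polynomial.C (X 0 : MvPolynomial (Fin 1) k)) * 0 := by
    rw [mul_zero, ← neg_neg ((Polynomial.X - Polynomial.C _) * e p)]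
    rw [← neg_mul, neg_sub, h5, neg_zero]
  have h7 := (Polynomial.monic_X_sub_C (X 0 : MvPolynomial (Fin 1) k)).isRegular.left h6
  exact e.injective (by rw [h7, map_zero])

lemma esymm_two : esymm (Fin 2) k 2 = X 0 * X 1 := by
  have h : Finset.powersetCard 2 (Finset.univ : Finset (Fin 2)) = {Finset.univ} := by decide
  rw [esymm, h, Finset.sum_singleton, Fin.prod_univ_two]

lemma psi_inj : Function.Injective (aeval ![X 0 + X 1, X 0 * X 1] :
    MvPolynomial (Fin 2) k →ₐ[k] MvPolynomial (Fin 2) k) := by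
  have hfun : (fun i : Fin 2 => esymm (Fin 2) k (i + 1)) = ![X 0 + X 1, X 0 * X 1] := by
    funext i
    fin_cases i
    · simp [esymm_one, Fin.sum_univ_two]
    · simpa using esymm_two
  intro p q hpq
  apply esymmAlgHom_injective (σ := Fin 2) (n := 2) k (by simp)
  apply Subtype.ext
  rw [esymmAlgHom_apply, esymmAlgHom_apply, hfun]
  exact hpq

lemma key (r0 r1 : MvPolynomial (Fin 2) k)
    (h : (aeval ![X 0 + X 1, X 0 * X 1] r0 : MvPolynomial (Fin 2) k)
        + aeval ![X 0 + X 1, X 0 * X 1] r1 * (X 0 * X 1 ^ 2) = 0) :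
    r0 = 0 ∧ r1 = 0 := by
  set ψ : MvPolynomial (Fin 2) k →ₐ[k] MvPolynomial (Fin 2) k :=
    aeval ![X 0 + X 1, X 0 * X 1] with hψ
  have hsym : ∀ u : MvPolynomial (Fin 2) k,
      rename (⇑(Equiv.swap (0 : Fin 2) 1)) (ψ u) = ψ u := by
    have : (rename (⇑(Equiv.swap (0 : Fin 2) 1))).comp ψ = ψ := by
      apply MvPolynomial.algHom_ext
      intro i
      fin_cases i <;>
        simp [hψ, Equiv.swap_apply_def] <;> ring
    intro u
    exact congrArg (fun F => F u) (congrArg DFunLike.coe this)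
  have h2 : ψ r0 + ψ r1 * (X 1 * X 0 ^ 2) = 0 := by
    have := congrArg (rename (⇑(Equiv.swap (0 : Fin 2) 1))) h
    rw [map_zero, map_add, map_mul, hsym, hsym, map_mul, map_pow, rename_X, rename_X] at this
    simpa using this
  have h3 : (X 0 * X 1 ^ 2 - X 0 ^ 2 * X 1) * ψ r1 = 0 := by
    have := sub_eq_zero.mpr (h.trans h2.symm)
    rw [← this]; ring
  have hr1 : r1 = 0 := by
    apply psi_inj
    rw [map_zero]
    exact d_reg _ h3
  have hr0 : r0 = 0 := by
    apply psi_inj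
    rw [map_zero]
    rw [hr1, map_zero, zero_mul, add_zero] at h
    exact h
  exact ⟨hr0, hr1⟩

noncomputable def phi (k : Type) [CommRing k] :
    MvPolynomial (Fin 3) k →ₐ[k] MvPolynomial (Fin 2) k :=
  aeval ![X 0 + X 1, X 0 * X 1, X 0 * X 1 ^ 2]

noncomputable def EE (k : Type) [CommRing k] :
    MvPolynomial (Fin 3) k ≃ₐ[k] Polynomial (MvPolynomial (Fin 2) k) :=
  (renameEquiv k (Equiv.swap (0 : Fin 3) 2)).trans (finSuccEquiv k 2)

lemma EE_X0 : EE k (X 0) = Polynomial.C (X 1) := by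
  have h2 : (2 : Fin 3) = Fin.succ 1 := rfl
  simp only [EE, AlgEquiv.trans_apply, renameEquiv_apply, rename_X, Equiv.swap_apply_left, h2,
    finSuccEquiv_X_succ]

lemma EE_X1 : EE k (X 1) = Polynomial.C (X 0) := by
  have h1 : Equiv.swap (0 : Fin 3) 2 1 = Fin.succ 0 := by decide
  simp only [EE, AlgEquiv.trans_apply, renameEquiv_apply, rename_X, h1, finSuccEquiv_X_succ]

lemma EE_X2 : EE k (X 2) = Polynomial.X := by
  simp only [EE, AlgEquiv.trans_apply, renameEquiv_apply, rename_X, Equiv.swap_apply_right,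
    finSuccEquiv_X_zero]

noncomputable def FF (k : Type) [CommRing k] : Polynomial (MvPolynomial (Fin 2) k) :=
  Polynomial.X ^ 2 + (Polynomial.C (-(X 1 * X 0)) * Polynomial.X + Polynomial.C (X 0 ^ 3))

lemma FF_monic : (FF k).Monic :=
  Polynomial.monic_X_pow_add (lt_of_le_of_lt (Polynomial.degree_linear_le) (by decide))

lemma FF_degree [Nontrivial k] : (FF k).degree = 2 := by
  have h : (Polynomial.C (-(X 1 * X 0)) * Polynomial.X
      + Polynomial.C ((X 0 : MvPolynomial (Fin 2) k) ^ 3)).degree < (Polynomial.X ^ 2 :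
        Polynomial (MvPolynomial (Fin 2) k)).degree := by
    rw [Polynomial.degree_X_pow]
    exact lt_of_le_of_lt (Polynomial.degree_linear_le) (by decide)
  rw [FF, Polynomial.degree_add_eq_left_of_degree_lt h, Polynomial.degree_X_pow]
  norm_cast

lemma EE_f : EE k ((X 1 : MvPolynomial (Fin 3) k) ^ 3 + (X 2) ^ 2 - X 0 * X 1 * X 2) = FF k := by
  rw [map_sub, map_add, map_pow, map_pow, map_mul, map_mul, EE_X0, EE_X1, EE_X2, FF]
  simp only [map_neg, map_mul, map_pow]
  ring

lemma EE_symm_C (u : MvPolynomial (Fin 2) k) :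
    (EE k).symm (Polynomial.C u) = rename (![1, 0] : Fin 2 → Fin 3) u := by
  apply (EE k).injective
  rw [AlgEquiv.apply_symm_apply]
  have : (EE k).toAlgHom.comp (rename (![1, 0] : Fin 2 → Fin 3)) =
      (Polynomial.CAlgHom : MvPolynomial (Fin 2) k →ₐ[k] Polynomial (MvPolynomial (Fin 2) k)) := by
    apply MvPolynomial.algHom_ext
    intro i
    fin_cases i <;>
      simp [Polynomial.CAlgHom, EE_X0, EE_X1]
  have := congrArg (fun F => F u) (congrArg DFunLike.coe this)
  simpa [Polynomial.CAlgHom] using this.symm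

lemma ker_le [Nontrivial k] (g : MvPolynomial (Fin 3) k) (hg : phi k g = 0) :
    g ∈ Ideal.span ({(X 1 : MvPolynomial (Fin 3) k) ^ 3 + (X 2) ^ 2 - X 0 * X 1 * X 2} :
      Set (MvPolynomial (Fin 3) k)) := by
  set f : MvPolynomial (Fin 3) k := (X 1) ^ 3 + (X 2) ^ 2 - X 0 * X 1 * X 2 with hf
  set G := EE k g with hG
  set R := G %ₘ FF k with hR
  set Q := G /ₘ FF k with hQ
  have hdecomp : g = (EE k).symm R + f * (EE k).symm Q := by
    have h1 : R + FF k * Q = G := Polynomial.modByMonic_add_div G (FF k)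
    have h2 : (EE k).symm (FF k) = f := by
      rw [← EE_f, AlgEquiv.symm_apply_apply]
    calc g = (EE k).symm G := by rw [hG, AlgEquiv.symm_apply_apply]
    _ = (EE k).symm (R + FF k * Q) := by rw [h1]
    _ = (EE k).symm R + f * (EE k).symm Q := by rw [map_add, map_mul, h2]
  -- degree bound
  have hdeg : R.degree ≤ 1 := by
    have := Polynomial.degree_modByMonic_lt G (FF_monic (k := k))
    rw [FF_degree] at this
    rw [← hR] at this
    exact Order.lt_succ_iff.mp (by exact_mod_cast this)
  have hRrepr : R = Polynomial.C (R.coeff 1) * Polynomial.X + Polynomial.C (R.coeff 0) :=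
    Polynomial.eq_X_add_C_of_degree_le_one hdeg
  -- φ of E.symm R is zero
  have hfphi : phi k f = 0 := by
    rw [hf, phi]
    simp only [map_sub, map_add, map_pow, map_mul, aeval_X, Matrix.cons_val_zero,
      Matrix.cons_val_one, Matrix.head_cons, Matrix.cons_val_two, Matrix.tail_cons]
    ring
  have hphiR : phi k ((EE k).symm R) = 0 := by
    have := congrArg (phi k) hdecomp
    rw [hg, map_add, map_mul, hfphi, zero_mul, add_zero] at this
    exact this.symm
  -- compute φ (E.symm R)
  have hsymmX : (EE k).symm Polynomial.X = X 2 := by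
    rw [← EE_X2, AlgEquiv.symm_apply_apply]
  have hERform : (EE k).symm R =
      rename (![1, 0] : Fin 2 → Fin 3) (R.coeff 1) * X 2
        + rename (![1, 0] : Fin 2 → Fin 3) (R.coeff 0) := by
    conv_lhs => rw [hRrepr]
    rw [map_add, map_mul, EE_symm_C, EE_symm_C, hsymmX]
  have hcomp : ∀ u : MvPolynomial (Fin 2) k,
      phi k (rename (![1, 0] : Fin 2 → Fin 3) u)
        = aeval ![X 0 + X 1, X 0 * X 1] (rename (⇑(Equiv.swap (0 : Fin 2) 1)) u) := by
    intro u
    rw [phi, aeval_rename, aeval_rename]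
    have hfun : (![X 0 + X 1, X 0 * X 1, X 0 * X 1 ^ 2] ∘ (![1, 0] : Fin 2 → Fin 3))
        = (![X 0 + X 1, X 0 * X 1] ∘ ⇑(Equiv.swap (0 : Fin 2) 1) :
            Fin 2 → MvPolynomial (Fin 2) k) := by
      funext i
      fin_cases i <;> simp [Equiv.swap_apply_def]
    rw [hfun]
  have hmain : (aeval ![X 0 + X 1, X 0 * X 1]
        (rename (⇑(Equiv.swap (0 : Fin 2) 1)) (R.coeff 0)) : MvPolynomial (Fin 2) k)
      + aeval ![X 0 + X 1, X 0 * X 1] (rename (⇑(Equiv.swap (0 : Fin 2) 1)) (R.coeff 1))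
        * (X 0 * X 1 ^ 2) = 0 := by
    rw [hERform] at hphiR
    rw [map_add, map_mul] at hphiR
    rw [hcomp, hcomp] at hphiR
    have hphiX2 : phi k (X 2) = X 0 * X 1 ^ 2 := by
      rw [phi, aeval_X]
      rfl
    rw [hphiX2] at hphiR
    rw [← hphiR]
    ring
  obtain ⟨h0, h1⟩ := key _ _ hmain
  have hswapinj := rename_injective (R := k) (⇑(Equiv.swap (0 : Fin 2) 1)) (Equiv.injective _)
  have hc0 : R.coeff 0 = 0 := hswapinj (by rw [h0, map_zero])
  have hc1 : R.coeff 1 = 0 := hswapinj (by rw [h1, map_zero])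
  have hR0 : R = 0 := by rw [hRrepr, hc0, hc1]; simp
  rw [hdecomp, hR0, map_zero, zero_add]
  exact Ideal.mem_span_singleton.mpr ⟨(EE k).symm Q, rfl⟩

lemma phi_f : phi k ((X 1 : MvPolynomial (Fin 3) k) ^ 3 + (X 2) ^ 2 - X 0 * X 1 * X 2) = 0 := by
  rw [phi]
  simp only [map_sub, map_add, map_pow, map_mul, aeval_X, Matrix.cons_val_zero,
    Matrix.cons_val_one, Matrix.head_cons, Matrix.cons_val_two, Matrix.tail_cons]
  ring

lemma hker : Ideal.span ({(X 1 : MvPolynomial (Fin 3) k) ^ 3 + (X 2) ^ 2 - X 0 * X 1 * X 2} :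
    Set (MvPolynomial (Fin 3) k)) = RingHom.ker (phi k) := by
  apply le_antisymm
  · rw [Ideal.span_le]
    intro x hx
    rw [Set.mem_singleton_iff] at hx
    subst hx
    exact RingHom.mem_ker.mpr phi_f
  · rcases subsingleton_or_nontrivial k with h | h
    · intro x _
      have : x = (0 : MvPolynomial (Fin 3) k) := Subsingleton.elim _ _
      rw [this]
      exact Ideal.zero_mem _
    · intro x hx
      exact ker_le x (RingHom.mem_ker.mp hx)

lemma hrange : (phi k).range = Algebra.adjoin k
    ({X 0 + X 1, X 0 * X 1, X 0 * (X 1) ^ 2} : Set (MvPolynomial (Fin 2) k)) := by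
  rw [phi, ← Algebra.adjoin_range_eq_range_aeval]
  congr 1
  ext x
  simp [Matrix.range_cons, Matrix.range_empty]
  tauto

/-- The subring of `k[x,y]` generated by `x+y`, `xy`, `xy²` is isomorphic to
`k[a,b,c]/(b³ + c² - abc)` via `a ↦ x+y`, `b ↦ xy`, `c ↦ xy²`. -/
theorem stmt0 (k : Type) [CommRing k] :
    ∃ e : (MvPolynomial (Fin 3) k ⧸
        Ideal.span ({(X 1 : MvPolynomial (Fin 3) k) ^ 3 + (X 2) ^ 2 - X 0 * X 1 * X 2} :
          Set (MvPolynomial (Fin 3) k))) ≃ₐ[k]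
        Algebra.adjoin k ({X 0 + X 1, X 0 * X 1, X 0 * (X 1) ^ 2} :
          Set (MvPolynomial (Fin 2) k)),
      (Algebra.adjoin k ({X 0 + X 1, X 0 * X 1, X 0 * (X 1) ^ 2} :
          Set (MvPolynomial (Fin 2) k))).val.comp
        (e.toAlgHom.comp (Ideal.Quotient.mkₐ k
          (Ideal.span ({(X 1 : MvPolynomial (Fin 3) k) ^ 3 + (X 2) ^ 2 - X 0 * X 1 * X 2} :
            Set (MvPolynomial (Fin 3) k))))) =
      aeval ![X 0 + X 1, X 0 * X 1, X 0 * (X 1) ^ 2] := by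
  refine ⟨(Ideal.quotientEquivAlgOfEq k hker).trans
    ((Ideal.quotientKerEquivRange (phi k)).trans (Subalgebra.equivOfEq _ _ hrange)), ?_⟩
  apply MvPolynomial.algHom_ext
  intro i
  simp only [AlgHom.coe_comp, Function.comp_apply, Ideal.Quotient.mkₐ_eq_mk,
    AlgEquiv.toAlgHom_eq_coe, AlgHom.coe_coe, AlgEquiv.trans_apply,
    Ideal.quotientEquivAlgOfEq_mk, Subalgebra.coe_val]
  rw [Ideal.quotientKerEquivRange]
  rfl
end

section
/- Let A = k[x,y], let B = k[x,y]/(xy) (functions on the union of the coordinate axes), and let C = k[t] map to B by t ↦ x + y (restriction along the map from the axes to a line identifying both axes with the line). Then the fiber product ring C ×_B A (pairs (c,a) with equal images in B) is isomorphic to the subring k[x+y, xy, xy^2] of k[x,y]. -/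
set_option maxHeartbeats 1000000

open MvPolynomial

variable (k : Type) [CommRing k]

private noncomputable abbrev sP : MvPolynomial (Fin 2) k := X 0 + X 1
private noncomputable abbrev pP : MvPolynomial (Fin 2) k := X 0 * X 1
private noncomputable abbrev qP : MvPolynomial (Fin 2) k := X 0 * (X 1) ^ 2

/-- every g = a + y*b with a,b symmetric-generated -/
lemma decomp (g : MvPolynomial (Fin 2) k) :
    ∃ a b : MvPolynomial (Fin 2) k,
      a ∈ Algebra.adjoin k ({sP k, pP k} : Set _) ∧
      b ∈ Algebra.adjoin k ({sP k, pP k} : Set _) ∧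
      g = a + X 1 * b := by
  induction g using MvPolynomial.induction_on with
  | C c => exact ⟨C c, 0, by simpa using Subalgebra.algebraMap_mem (Algebra.adjoin k ({sP k, pP k} : Set (MvPolynomial (Fin 2) k))) c, zero_mem _, by ring⟩
  | add f g hf hg =>
      obtain ⟨a, b, ha, hb, rfl⟩ := hf
      obtain ⟨a', b', ha', hb', rfl⟩ := hg
      exact ⟨a + a', b + b', add_mem ha ha', add_mem hb hb', by ring⟩
  | mul_X g i hg =>
      obtain ⟨a, b, ha, hb, rfl⟩ := hg
      have hs : sP k ∈ Algebra.adjoin k ({sP k, pP k} : Set _) :=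
        Algebra.subset_adjoin (by simp)
      have hp : pP k ∈ Algebra.adjoin k ({sP k, pP k} : Set _) :=
        Algebra.subset_adjoin (by simp)
      fin_cases i
      · refine ⟨a * sP k + b * pP k, -a, add_mem (mul_mem ha hs) (mul_mem hb hp),
          neg_mem ha, ?_⟩
        simp only [sP, pP, show (⟨0, by omega⟩ : Fin 2) = 0 from rfl]; ring
      · refine ⟨-(pP k * b), a + sP k * b, neg_mem (mul_mem hp hb),
          add_mem ha (mul_mem hs hb), ?_⟩
        simp only [sP, pP, show (⟨1, by omega⟩ : Fin 2) = 1 from rfl]; ring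

lemma ideal_mem_adjoin (g : MvPolynomial (Fin 2) k) :
    pP k * g ∈ Algebra.adjoin k ({sP k, pP k, qP k} : Set _) := by
  obtain ⟨a, b, ha, hb, rfl⟩ := decomp k g
  have hmono : Algebra.adjoin k ({sP k, pP k} : Set _) ≤
      Algebra.adjoin k ({sP k, pP k, qP k} : Set _) := by
    apply Algebra.adjoin_mono; intro x hx
    simp only [Set.mem_insert_iff, Set.mem_singleton_iff] at hx
    rcases hx with rfl | rfl <;> simp
  have hp : pP k ∈ Algebra.adjoin k ({sP k, pP k, qP k} : Set _) :=
    Algebra.subset_adjoin (by simp)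
  have hq : qP k ∈ Algebra.adjoin k ({sP k, pP k, qP k} : Set _) :=
    Algebra.subset_adjoin (by simp)
  have : pP k * (a + X 1 * b) = pP k * a + qP k * b := by simp only [pP, qP]; ring
  rw [this]
  exact add_mem (mul_mem hp (hmono ha)) (mul_mem hq (hmono hb))

lemma adjoin_repr (f : MvPolynomial (Fin 2) k)
    (hf : f ∈ Algebra.adjoin k ({sP k, pP k, qP k} : Set _)) :
    ∃ P : Polynomial k, f - Polynomial.aeval (sP k) P ∈ Ideal.span ({pP k} : Set _) := by
  induction hf using Algebra.adjoin_induction with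
  | mem x hx =>
      simp only [Set.mem_insert_iff, Set.mem_singleton_iff] at hx
      rcases hx with rfl | rfl | rfl
      · exact ⟨Polynomial.X, by simp⟩
      · exact ⟨0, by simpa using Ideal.subset_span (Set.mem_singleton _)⟩
      · refine ⟨0, ?_⟩
        simp only [map_zero, sub_zero]
        rw [Ideal.mem_span_singleton']
        exact ⟨X 1, by simp [qP, pP]; ring⟩
  | algebraMap r => exact ⟨Polynomial.C r, by simp⟩
  | add x y _ _ hx hy =>
      obtain ⟨P, hP⟩ := hx; obtain ⟨Q, hQ⟩ := hy
      exact ⟨P + Q, by rw [map_add]; convert add_mem hP hQ using 1; ring⟩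
  | mul x y _ _ hx hy =>
      obtain ⟨P, hP⟩ := hx; obtain ⟨Q, hQ⟩ := hy
      refine ⟨P * Q, ?_⟩
      have : x * y - Polynomial.aeval (sP k) (P * Q) =
          x * (y - Polynomial.aeval (sP k) Q) +
          (x - Polynomial.aeval (sP k) P) * Polynomial.aeval (sP k) Q := by
        rw [map_mul]; ring
      rw [this]
      exact add_mem (Ideal.mul_mem_left _ _ hQ) (Ideal.mul_mem_right _ _ hP)

lemma aeval_inj (P : Polynomial k)
    (h : Polynomial.aeval (sP k) P ∈ Ideal.span ({pP k} : Set (MvPolynomial (Fin 2) k))) :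
    P = 0 := by
  classical
  set ψ : MvPolynomial (Fin 2) k →ₐ[k] Polynomial k :=
    MvPolynomial.aeval ![Polynomial.X, 0] with hψ
  rw [Ideal.mem_span_singleton'] at h
  obtain ⟨r, hr⟩ := h
  have h1 : ψ (Polynomial.aeval (sP k) P) = P := by
    rw [← Polynomial.aeval_algHom_apply]
    have : ψ (sP k) = Polynomial.X := by simp [ψ, sP]
    rw [this, Polynomial.aeval_X_left_apply]
  have h2 : ψ (r * pP k) = 0 := by
    simp [ψ, pP, Matrix.cons_val_one]
  rw [← hr, h2] at h1
  exact h1.symm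

/-- `B = k[x,y]/(xy)`, `C = k[t] → B`, `t ↦ x+y`.  The fiber product `C ×_B k[x,y]`
is isomorphic to the subring `k[x+y, xy, xy²] ⊆ k[x,y]`. -/
theorem stmt1 (k : Type) [CommRing k] :
    Nonempty
      ((RingHom.eqLocus
          (((Ideal.Quotient.mk (Ideal.span
                ({X 0 * X 1} : Set (MvPolynomial (Fin 2) k)))).comp
              (Polynomial.aeval (X 0 + X 1 : MvPolynomial (Fin 2) k)).toRingHom).comp
            (RingHom.fst (Polynomial k) (MvPolynomial (Fin 2) k)))
          ((Ideal.Quotient.mk (Ideal.span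
              ({X 0 * X 1} : Set (MvPolynomial (Fin 2) k)))).comp
            (RingHom.snd (Polynomial k) (MvPolynomial (Fin 2) k)))) ≃+*
        Algebra.adjoin k ({X 0 + X 1, X 0 * X 1, X 0 * (X 1) ^ 2} :
          Set (MvPolynomial (Fin 2) k))) := by
  classical
  set I : Ideal (MvPolynomial (Fin 2) k) := Ideal.span ({X 0 * X 1} : Set _) with hI
  set A : Subalgebra k (MvPolynomial (Fin 2) k) :=
    Algebra.adjoin k ({X 0 + X 1, X 0 * X 1, X 0 * (X 1) ^ 2} : Set _) with hA
  set E : Subring (Polynomial k × MvPolynomial (Fin 2) k) :=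
    RingHom.eqLocus
      (((Ideal.Quotient.mk I).comp
          (Polynomial.aeval (X 0 + X 1 : MvPolynomial (Fin 2) k)).toRingHom).comp
        (RingHom.fst (Polynomial k) (MvPolynomial (Fin 2) k)))
      ((Ideal.Quotient.mk I).comp
        (RingHom.snd (Polynomial k) (MvPolynomial (Fin 2) k))) with hE
  have hEmem : ∀ z : Polynomial k × MvPolynomial (Fin 2) k,
      z ∈ E ↔ Polynomial.aeval (X 0 + X 1 : MvPolynomial (Fin 2) k) z.1 - z.2 ∈ I := by
    intro z
    have h0 : z ∈ E ↔ (Ideal.Quotient.mk I)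
        (Polynomial.aeval (X 0 + X 1 : MvPolynomial (Fin 2) k) z.1) =
        (Ideal.Quotient.mk I) z.2 := Iff.rfl
    rw [h0, Ideal.Quotient.mk_eq_mk_iff_sub_mem]
  have hIA : ∀ x ∈ I, x ∈ A := by
    intro x hx
    rw [hI, Ideal.mem_span_singleton'] at hx
    obtain ⟨r, rfl⟩ := hx
    rw [mul_comm]
    exact ideal_mem_adjoin k r
  have hsA : ∀ P : Polynomial k,
      Polynomial.aeval (X 0 + X 1 : MvPolynomial (Fin 2) k) P ∈ A := by
    intro P
    have hmono : Algebra.adjoin k ({X 0 + X 1} : Set (MvPolynomial (Fin 2) k)) ≤ A :=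
      Algebra.adjoin_mono (Set.singleton_subset_iff.mpr (by simp))
    exact hmono (Polynomial.aeval_mem_adjoin_singleton k _)
  have hmem : ∀ z : E, ((RingHom.snd (Polynomial k) (MvPolynomial (Fin 2) k)).comp
      E.subtype) z ∈ A.toSubring := by
    rintro ⟨⟨P, f⟩, hz⟩
    rw [hEmem] at hz
    have : f = Polynomial.aeval (X 0 + X 1 : MvPolynomial (Fin 2) k) P -
        (Polynomial.aeval (X 0 + X 1 : MvPolynomial (Fin 2) k) P - f) := by ring
    show f ∈ A
    rw [this]
    exact sub_mem (hsA P) (hIA _ hz)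
  let G : E →+* A.toSubring :=
    RingHom.codRestrict ((RingHom.snd (Polynomial k) (MvPolynomial (Fin 2) k)).comp
      E.subtype) A.toSubring hmem
  have hGinj : Function.Injective G := by
    rintro ⟨⟨P, f⟩, hz⟩ ⟨⟨Q, g⟩, hw⟩ h
    have hfg : f = g := congrArg Subtype.val h
    subst hfg
    rw [hEmem] at hz hw
    have hsub : Polynomial.aeval (X 0 + X 1 : MvPolynomial (Fin 2) k) (P - Q) ∈ I := by
      have := sub_mem hz hw
      simpa [map_sub] using this
    have : P - Q = 0 := aeval_inj k _ hsub
    have hPQ : P = Q := by linear_combination this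
    subst hPQ; rfl
  have hGsurj : Function.Surjective G := by
    rintro ⟨f, hf⟩
    obtain ⟨P, hP⟩ := adjoin_repr k f hf
    have hz : (P, f) ∈ E := by
      rw [hEmem]
      simpa using neg_mem hP
    exact ⟨⟨(P, f), hz⟩, rfl⟩
  exact ⟨RingEquiv.ofBijective G ⟨hGinj, hGsurj⟩⟩
end

section
/- Let M be a lattice, Σ a fan, σ ∈ Σ a cone, and τ ∈ Σ a cone whose closure contains σ. Let q: M → M/(Span(σ) ∩ M) = M_σ be the quotient. Then the image of τ under q ⊗ ℝ is a rational polyhedral cone in M_σ ⊗ ℝ, and the perpendicular torus (q(τ))^⊥ inside Hom(M_σ, S^1), viewed inside Hom(M, S^1) via the inclusion dual to q, equals τ^⊥. -/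
noncomputable section

/-- Realification of a lattice vector. -/
def latR {n : ℕ} (m : Fin n → ℤ) : Fin n → ℝ := fun i => (m i : ℝ)

/-- A rational polyhedral cone in `ℝⁿ`. -/
def IsRatPolyCone {n : ℕ} (σ : Set (Fin n → ℝ)) : Prop :=
  ∃ s : Finset (Fin n → ℤ), σ =
    {x | ∃ a : (Fin n → ℤ) → ℝ, (∀ v, 0 ≤ a v) ∧ x = ∑ v ∈ s, a v • latR v}

/-- `c^⊥ ⊆ Hom(M, S¹)`. -/
def perp {n : ℕ} (σ : Set (Fin n → ℝ)) : Set ((Fin n → ℤ) →+ AddCircle (1 : ℝ)) :=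
  {χ | ∀ m : Fin n → ℤ, latR m ∈ σ → χ m = 0}

/-- Lattice points lying in a real subspace: `Span(σ) ∩ M`. -/
def latIn {n : ℕ} (W : Submodule ℝ (Fin n → ℝ)) : AddSubgroup (Fin n → ℤ) where
  carrier := {m | latR m ∈ W}
  zero_mem' := by
    have h : latR (0 : Fin n → ℤ) = 0 := by funext i; simp [latR]
    simp only [Set.mem_setOf_eq, h]; exact W.zero_mem
  add_mem' := by
    intro a b ha hb
    have h : latR (a + b) = latR a + latR b := by funext i; simp [latR]
    simp only [Set.mem_setOf_eq, h]; exact W.add_mem ha hb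
  neg_mem' := by
    intro a ha
    have h : latR (-a) = -latR a := by funext i; simp [latR]
    simp only [Set.mem_setOf_eq, h]; exact W.neg_mem ha


namespace Stmt7Aux

def latRHom {n : ℕ} : (Fin n → ℤ) →+ (Fin n → ℝ) where
  toFun := latR
  map_zero' := by funext i; simp [latR]
  map_add' := by intro a b; funext i; simp [latR]

lemma latR_inj {n : ℕ} : Function.Injective (latR (n := n)) := by
  intro a b h
  funext i
  have : ((a i : ℝ)) = (b i : ℝ) := congrFun h i
  exact_mod_cast this

lemma latR_add {n : ℕ} (a b : Fin n → ℤ) : latR (a + b) = latR a + latR b := by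
  funext i; simp [latR]

lemma latR_sum {n : ℕ} (s : Finset (Fin n → ℤ)) :
    latR (∑ v ∈ s, v) = ∑ v ∈ s, latR v :=
  map_sum (latRHom (n := n)) id s

lemma latR_nsmul {n : ℕ} (k : ℕ) (m : Fin n → ℤ) :
    latR (k • m) = (k : ℝ) • latR m := by
  funext i; simp [latR, mul_comm]

-- generators lie in the cone
lemma gen_mem {n : ℕ} {σ : Set (Fin n → ℝ)} {s : Finset (Fin n → ℤ)}
    (hs : σ = {x | ∃ a : (Fin n → ℤ) → ℝ, (∀ v, 0 ≤ a v) ∧ x = ∑ v ∈ s, a v • latR v})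
    {v : Fin n → ℤ} (hv : v ∈ s) : latR v ∈ σ := by
  rw [hs]
  classical
  refine ⟨fun w => if w = v then 1 else 0, fun w => by positivity, ?_⟩
  symm
  rw [Finset.sum_eq_single v (fun w _ hw => by simp [hw]) (fun h => absurd hv h)]
  simp

lemma cone_add {n : ℕ} {σ : Set (Fin n → ℝ)} {s : Finset (Fin n → ℤ)}
    (hs : σ = {x | ∃ a : (Fin n → ℤ) → ℝ, (∀ v, 0 ≤ a v) ∧ x = ∑ v ∈ s, a v • latR v})
    {x y : Fin n → ℝ} (hx : x ∈ σ) (hy : y ∈ σ) : x + y ∈ σ := by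
  rw [hs] at hx hy ⊢
  obtain ⟨a, ha, rfl⟩ := hx
  obtain ⟨b, hb, rfl⟩ := hy
  exact ⟨a + b, fun v => add_nonneg (ha v) (hb v), by
    rw [← Finset.sum_add_distrib]
    exact Finset.sum_congr rfl fun v _ => (add_smul _ _ _).symm⟩

lemma span_eq {n : ℕ} {σ : Set (Fin n → ℝ)} {s : Finset (Fin n → ℤ)}
    (hs : σ = {x | ∃ a : (Fin n → ℤ) → ℝ, (∀ v, 0 ≤ a v) ∧ x = ∑ v ∈ s, a v • latR v}) :
    Submodule.span ℝ σ = Submodule.span ℝ ((s.image latR : Finset (Fin n → ℝ)) : Set _) := by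
  classical
  apply le_antisymm
  · rw [Submodule.span_le]
    intro x hx
    rw [hs] at hx
    obtain ⟨a, _, rfl⟩ := hx
    exact Submodule.sum_mem _ fun v hv =>
      Submodule.smul_mem _ _ (Submodule.subset_span (by simp [Finset.mem_image]; exact ⟨v, hv, rfl⟩))
  · rw [Submodule.span_le]
    intro x hx
    simp only [Finset.coe_image, Set.mem_image, Finset.mem_coe] at hx
    obtain ⟨v, hv, rfl⟩ := hx
    exact Submodule.subset_span (gen_mem hs hv)





lemma key {n : ℕ} {σ τ : Set (Fin n → ℝ)}
    (hσ : IsRatPolyCone σ) (hτ : IsRatPolyCone τ) (hστ : σ ⊆ τ)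
    {χ : (Fin n → ℤ) →+ AddCircle (1 : ℝ)} (hχ : χ ∈ perp τ)
    {m : Fin n → ℤ}
    (hm : (Submodule.span ℝ σ).mkQ (latR m) ∈ (Submodule.span ℝ σ).mkQ '' τ) :
    χ m = 0 := by
  classical
  obtain ⟨s, hs⟩ := hσ
  obtain ⟨t, ht⟩ := hτ
  obtain ⟨y, hy, hyq⟩ := hm
  -- z := latR m - y ∈ span ℝ σ
  have hz : latR m - y ∈ Submodule.span ℝ σ :=
    (Submodule.Quotient.eq (Submodule.span ℝ σ)).mp hyq.symm
  set z := latR m - y with hzdef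
  -- coefficients for z over generators of σ
  rw [span_eq hs] at hz
  obtain ⟨f, -, hf⟩ := Submodule.mem_span_finset.mp hz
  have hf' : ∑ v ∈ s, f (latR v) • latR v = z := by
    rw [Finset.sum_image (g := latR) (f := fun x => f x • x)
      (fun a _ b _ h => latR_inj h)] at hf
    exact hf
  -- choose k large
  set C : ℝ := ∑ v ∈ s, |f (latR v)|
  set k : ℕ := ⌈C⌉₊
  have hk : ∀ v ∈ s, 0 ≤ f (latR v) + (k : ℝ) := by
    intro v hv
    have h1 : -f (latR v) ≤ |f (latR v)| := neg_le_abs _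
    have h2 : |f (latR v)| ≤ C :=
      Finset.single_le_sum (f := fun v => |f (latR v)|) (fun w _ => abs_nonneg _) hv
    have h3 : C ≤ (k : ℝ) := Nat.le_ceil C
    linarith
  set u : Fin n → ℤ := ∑ v ∈ s, v with hudef
  have hu : latR u = ∑ v ∈ s, latR v := latR_sum s
  have huσ : latR u ∈ σ := by
    rw [hs]
    exact ⟨fun _ => 1, fun _ => zero_le_one, by simp [hu]⟩
  -- z + k • latR u ∈ σ
  have hzu : z + (k : ℝ) • latR u ∈ σ := by
    rw [hs]
    refine ⟨fun v => if v ∈ s then f (latR v) + (k : ℝ) else 0, ?_, ?_⟩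
    · intro v
      by_cases hv : v ∈ s
      · simpa [hv] using hk v hv
      · simp [hv]
    · symm
      calc ∑ v ∈ s, (if v ∈ s then f (latR v) + (k : ℝ) else 0) • latR v
          = ∑ v ∈ s, (f (latR v) • latR v + (k : ℝ) • latR v) :=
            Finset.sum_congr rfl fun v hv => by rw [if_pos hv, add_smul]
        _ = z + (k : ℝ) • latR u := by
            rw [Finset.sum_add_distrib, hf', hu, Finset.smul_sum]
  -- latR (m + k • u) ∈ τ
  have hmem : latR (m + k • u) ∈ τ := by
    have : latR (m + k • u) = y + (z + (k : ℝ) • latR u) := by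
      rw [latR_add, latR_nsmul, hzdef]
      abel
    rw [this]
    exact cone_add ht hy (hστ hzu)
  -- conclude
  have h1 : χ (m + k • u) = 0 := hχ _ hmem
  have h2 : χ u = 0 := hχ _ (hστ huσ)
  have h3 : χ (m + k • u) = χ m + k • χ u := by
    rw [map_add, map_nsmul]
  rw [h1, h2, smul_zero, add_zero] at h3
  exact h3.symm


end Stmt7Aux

/-- For cones `σ ⊆ τ̄` of a fan, with `q : M_ℝ → M_ℝ/Span(σ)` the quotient:
(a) the image `q(τ)` is a rational polyhedral cone (generated by images of lattice
vectors), and (b) the perpendicular torus of `q(τ)` inside `Hom(M/(Span(σ) ∩ M), S¹)`,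
viewed inside `Hom(M, S¹)` by precomposition with the quotient of lattices, equals `τ^⊥`. -/
theorem stmt7 {n : ℕ} (σ τ : Set (Fin n → ℝ))
    (hσ : IsRatPolyCone σ) (hτ : IsRatPolyCone τ) (hστ : σ ⊆ τ) :
    (∃ s : Finset (Fin n → ℤ),
        (Submodule.span ℝ σ).mkQ '' τ =
          {x | ∃ a : (Fin n → ℤ) → ℝ, (∀ v, 0 ≤ a v) ∧
            x = ∑ v ∈ s, a v • (Submodule.span ℝ σ).mkQ (latR v)}) ∧
    {χ : (Fin n → ℤ) →+ AddCircle (1 : ℝ) |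
        ∃ φ : ((Fin n → ℤ) ⧸ latIn (Submodule.span ℝ σ)) →+ AddCircle (1 : ℝ),
          χ = φ.comp (QuotientAddGroup.mk' (latIn (Submodule.span ℝ σ))) ∧
          ∀ m : Fin n → ℤ,
            (Submodule.span ℝ σ).mkQ (latR m) ∈ (Submodule.span ℝ σ).mkQ '' τ →
              φ (QuotientAddGroup.mk' (latIn (Submodule.span ℝ σ)) m) = 0} = perp τ := by

  classical
  constructor
  · -- part (a)
    obtain ⟨t, ht⟩ := hτ
    refine ⟨t, ?_⟩
    ext x
    constructor
    · rintro ⟨y, hy, rfl⟩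
      rw [ht] at hy
      obtain ⟨a, ha, rfl⟩ := hy
      exact ⟨a, ha, by rw [map_sum]; exact Finset.sum_congr rfl fun v _ => map_smul _ _ _⟩
    · rintro ⟨a, ha, rfl⟩
      refine ⟨∑ v ∈ t, a v • latR v, by rw [ht]; exact ⟨a, ha, rfl⟩, ?_⟩
      rw [map_sum]; exact Finset.sum_congr rfl fun v _ => map_smul _ _ _
  · -- part (b)
    ext χ
    simp only [Set.mem_setOf_eq]
    constructor
    · rintro ⟨φ, rfl, hφ⟩ m hm
      exact hφ m ⟨latR m, hm, rfl⟩
    · intro hχ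
      have h0 : (0 : Fin n → ℝ) ∈ τ := by
        obtain ⟨t, ht⟩ := hτ
        rw [ht]; exact ⟨fun _ => 0, fun _ => le_rfl, by simp⟩
      have hker : ∀ m ∈ latIn (Submodule.span ℝ σ), χ m = 0 := by
        intro m hmem
        apply Stmt7Aux.key hσ hτ hστ hχ
        refine ⟨0, h0, ?_⟩
        rw [map_zero]
        exact ((Submodule.Quotient.mk_eq_zero _).mpr hmem).symm
      refine ⟨QuotientAddGroup.lift _ χ hker, ?_, ?_⟩
      · ext m; rfl
      · intro m hm
        have : QuotientAddGroup.lift _ χ hker (QuotientAddGroup.mk' _ m) = χ m :=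
          QuotientAddGroup.lift_mk' _ _ _
        rw [this]
        exact Stmt7Aux.key hσ hτ hστ hχ hm
end
end

section
/- Let M be a lattice and σ a rational polyhedral cone in M ⊗ ℝ. The monoid S_σ = σ^∨ ∩ M^∨ (lattice points of the dual cone) is a finitely generated commutative monoid. -/
/-- The monoid `S_σ = σ^∨ ∩ M^∨` of lattice linear functionals nonnegative on `σ`,
identifying `M^∨` with `ℤⁿ` by the dot product pairing. -/
def dualLatMonoid {n : ℕ} (σ : Set (Fin n → ℝ)) : AddSubmonoid (Fin n → ℤ) where
  carrier := {u | ∀ x ∈ σ, 0 ≤ ∑ i, (u i : ℝ) * x i}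
  zero_mem' := by intro x _; simp
  add_mem' := by
    intro a b ha hb x hx
    have h : (∑ i, (((a + b) i : ℤ) : ℝ) * x i) =
        (∑ i, (a i : ℝ) * x i) + ∑ i, (b i : ℝ) * x i := by
      rw [← Finset.sum_add_distrib]
      refine Finset.sum_congr rfl fun i _ => ?_
      push_cast [Pi.add_apply]
      ring
    rw [h]
    exact add_nonneg (ha x hx) (hb x hx)

/-- If two ℕ-valued functions satisfy `z ≤ y` pointwise and have equal sums, they are equal. -/
lemma eq_of_le_of_sum_eq {ι : Type*} [Fintype ι] {z y : ι → ℕ} (hle : z ≤ y)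
    (hsum : ∑ i, z i = ∑ i, y i) : z = y := by
  funext i
  by_contra hne
  have hlt : z i < y i := lt_of_le_of_ne (hle i) hne
  have : ∑ j, z j < ∑ j, y j :=
    Finset.sum_lt_sum (fun j _ => hle j) ⟨i, Finset.mem_univ i, hlt⟩
  omega

/-- A submonoid of `ι → ℕ` closed under (honest) subtraction of smaller elements is
finitely generated.  This is the Dickson-lemma core of Gordan's lemma. -/
lemma fg_of_sub_closed {ι : Type*} [Fintype ι] (P : AddSubmonoid (ι → ℕ))
    (hsub : ∀ x ∈ P, ∀ y ∈ P, y ≤ x → x - y ∈ P) : P.FG := by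
  classical
  -- set of minimal nonzero elements
  set Min : Set (ι → ℕ) :=
    {x | x ∈ P ∧ x ≠ 0 ∧ ∀ y ∈ P, y ≠ 0 → y ≤ x → y = x} with hMin
  have hanti : IsAntichain (· ≤ ·) Min := by
    intro x hx y hy hne hle
    exact hne (hy.2.2 x hx.1 hx.2.1 hle)
  have hfin : Min.Finite :=
    hanti.finite_of_partiallyWellOrderedOn (Set.isPWO_of_wellQuasiOrderedLE Min)
  refine ⟨hfin.toFinset, le_antisymm ?_ ?_⟩
  · rw [AddSubmonoid.closure_le]
    intro x hx
    rw [Set.Finite.coe_toFinset] at hx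
    exact hx.1
  · -- every element of P is in the closure, by strong induction on the sum
    intro x hx
    suffices H : ∀ N : ℕ, ∀ x, x ∈ P → ∑ i, x i = N →
        x ∈ AddSubmonoid.closure (hfin.toFinset : Set (ι → ℕ)) from H _ x hx rfl
    intro N
    induction N using Nat.strong_induction_on with
    | _ N ih =>
      intro x hx hN
      by_cases hx0 : x = 0
      · subst hx0; exact AddSubmonoid.zero_mem _
      -- find a minimal nonzero element below x
      have hex : ∃ k, ∃ y, (y ∈ P ∧ y ≠ 0 ∧ y ≤ x) ∧ ∑ i, y i = k :=
        ⟨∑ i, x i, x, ⟨hx, hx0, le_refl x⟩, rfl⟩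
      obtain ⟨y, ⟨hyP, hy0, hyx⟩, hysum⟩ := Nat.find_spec hex
      have hymin : ∀ z ∈ P, z ≠ 0 → z ≤ y → z = y := by
        intro z hzP hz0 hzy
        have hzx : z ≤ x := le_trans hzy hyx
        have h1 : Nat.find hex ≤ ∑ i, z i :=
          Nat.find_min' hex ⟨z, ⟨hzP, hz0, hzx⟩, rfl⟩
        have h2 : ∑ i, z i ≤ ∑ i, y i :=
          Finset.sum_le_sum (fun i _ => hzy i)
        have : ∑ i, z i = ∑ i, y i := by omega
        exact eq_of_le_of_sum_eq hzy this
      have hyMin : y ∈ Min := ⟨hyP, hy0, hymin⟩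
      have hxy : x - y ∈ P := hsub x hx y hyP hyx
      -- sum decreases
      have hysum_pos : 0 < ∑ i, y i := by
        rcases Function.ne_iff.mp hy0 with ⟨i, hi⟩
        have : 0 < y i := Nat.pos_of_ne_zero (by simpa using hi)
        exact lt_of_lt_of_le this (Finset.single_le_sum (fun j _ => Nat.zero_le _)
          (Finset.mem_univ i))
      have hsubsum : ∑ i, (x - y) i = ∑ i, x i - ∑ i, y i := by
        have : ∀ i, (x - y) i = x i - y i := fun i => rfl
        simp only [this]
        exact (Finset.sum_tsub_distrib (Finset.univ) (fun i _ => hyx i))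
      have hsum_le : ∑ i, y i ≤ ∑ i, x i := Finset.sum_le_sum (fun i _ => hyx i)
      have hlt : ∑ i, (x - y) i < N := by
        rw [hsubsum]; omega
      have hxyC : x - y ∈ AddSubmonoid.closure (hfin.toFinset : Set (ι → ℕ)) :=
        ih _ hlt (x - y) hxy rfl
      have hyC : y ∈ AddSubmonoid.closure (hfin.toFinset : Set (ι → ℕ)) :=
        AddSubmonoid.subset_closure (by rwa [Set.Finite.coe_toFinset])
      have hxeq : x = y + (x - y) := by
        funext i
        have h1 : y i ≤ x i := hyx i
        have h2 : (x - y) i = x i - y i := rfl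
        show x i = y i + (x - y) i
        rw [h2]
        omega
      rw [hxeq]
      exact AddSubmonoid.add_mem _ hyC hxyC

/-- Membership in `dualLatMonoid σ` for a rational polyhedral cone is equivalent to the
finitely many integer inequalities against the generators. -/
lemma dualLatMonoid_mem_iff {n : ℕ} (s : Finset (Fin n → ℤ))
    (σ : Set (Fin n → ℝ))
    (hσ : σ = {x | ∃ a : (Fin n → ℤ) → ℝ, (∀ v, 0 ≤ a v) ∧ x = ∑ v ∈ s, a v • latR v})
    (u : Fin n → ℤ) :
    u ∈ dualLatMonoid σ ↔ ∀ v ∈ s, (0 : ℤ) ≤ ∑ i, u i * v i := by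
  constructor
  · intro hu v hv
    have hvσ : latR v ∈ σ := by
      rw [hσ]
      refine ⟨fun w => if w = v then 1 else 0, fun w => by positivity, ?_⟩
      rw [← Finset.sum_filter_add_sum_filter_not s (· = v)]
      have h1 : ∑ w ∈ s.filter (· = v), (if w = v then (1:ℝ) else 0) • latR w = latR v := by
        rw [Finset.filter_eq' s v]
        simp [hv]
      have h2 : ∑ w ∈ s.filter (¬ · = v), (if w = v then (1:ℝ) else 0) • latR w = 0 := by
        refine Finset.sum_eq_zero fun w hw => ?_
        rw [Finset.mem_filter] at hw
        simp [hw.2]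
      rw [h1, h2, add_zero]
    have h := hu (latR v) hvσ
    have hcast : (∑ i, (u i : ℝ) * latR v i) = ((∑ i, u i * v i : ℤ) : ℝ) := by
      push_cast [latR]; ring_nf
    rw [hcast] at h
    exact_mod_cast h
  · intro h x hx
    rw [hσ] at hx
    obtain ⟨a, ha, rfl⟩ := hx
    have key : (∑ i, (u i : ℝ) * (∑ v ∈ s, a v • latR v) i) =
        ∑ v ∈ s, a v * ∑ i, (u i : ℝ) * (v i : ℝ) := by
      simp only [Finset.sum_apply, Pi.smul_apply, latR, smul_eq_mul, Finset.mul_sum,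
        Finset.sum_mul]
      rw [Finset.sum_comm]
      refine Finset.sum_congr rfl fun v _ => Finset.sum_congr rfl fun i _ => by ring
    rw [key]
    refine Finset.sum_nonneg fun v hv => mul_nonneg (ha v) ?_
    have hcast : (∑ i, (u i : ℝ) * (v i : ℝ)) = ((∑ i, u i * v i : ℤ) : ℝ) := by
      push_cast; ring_nf
    rw [hcast]
    exact_mod_cast h v hv

/-- Gordan's lemma: for a rational polyhedral cone `σ`, the monoid `σ^∨ ∩ M^∨` is
finitely generated. -/
theorem stmt15 {n : ℕ} (σ : Set (Fin n → ℝ)) (hσ : IsRatPolyCone σ) :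
    (dualLatMonoid σ).FG := by
  classical
  obtain ⟨s, hσ⟩ := hσ
  -- index type for "positive part, negative part, slack variables"
  let ι := Sum (Fin n) (Sum (Fin n) {v : Fin n → ℤ // v ∈ s})
  -- the linear map recovering `u` from positive and negative parts
  let φ : (ι → ℕ) →+ (Fin n → ℤ) :=
    { toFun := fun f i => (f (.inl i) : ℤ) - (f (.inr (.inl i)) : ℤ)
      map_zero' := by funext i; simp
      map_add' := by
        intro f g; funext i
        simp only [Pi.add_apply]
        push_cast
        ring }
  -- the monoid of nonnegative solutions of the associated linear equations
  let L : AddSubmonoid (ι → ℕ) :=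
    { carrier := {f | ∀ v, ∀ hv : v ∈ s,
        ∑ i, ((f (.inl i) : ℤ) - (f (.inr (.inl i)) : ℤ)) * v i
          = (f (.inr (.inr ⟨v, hv⟩)) : ℤ)}
      zero_mem' := by intro v hv; simp
      add_mem' := by
        intro f g hf hg v hv
        have := hf v hv
        have := hg v hv
        simp only [Pi.add_apply]
        push_cast
        rw [show (∑ i, ((f (Sum.inl i) : ℤ) + (g (Sum.inl i) : ℤ)
            - ((f (Sum.inr (Sum.inl i)) : ℤ) + (g (Sum.inr (Sum.inl i)) : ℤ))) * v i)
            = (∑ i, ((f (Sum.inl i) : ℤ) - (f (Sum.inr (Sum.inl i)) : ℤ)) * v i)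
              + (∑ i, ((g (Sum.inl i) : ℤ) - (g (Sum.inr (Sum.inl i)) : ℤ)) * v i) by
          rw [← Finset.sum_add_distrib]
          exact Finset.sum_congr rfl fun i _ => by ring]
        omega }
  have hLsub : ∀ x ∈ L, ∀ y ∈ L, y ≤ x → x - y ∈ L := by
    intro x hx y hy hle v hv
    have hxv := hx v hv
    have hyv := hy v hv
    have hsub : ∀ j : ι, ((x - y) j : ℤ) = (x j : ℤ) - (y j : ℤ) := by
      intro j
      have : (x - y) j = x j - y j := rfl
      rw [this, Nat.cast_sub (hle j)]
    simp only [hsub]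
    rw [show (∑ i, ((x (Sum.inl i) : ℤ) - (y (Sum.inl i) : ℤ)
        - ((x (Sum.inr (Sum.inl i)) : ℤ) - (y (Sum.inr (Sum.inl i)) : ℤ))) * v i)
        = (∑ i, ((x (Sum.inl i) : ℤ) - (x (Sum.inr (Sum.inl i)) : ℤ)) * v i)
          - (∑ i, ((y (Sum.inl i) : ℤ) - (y (Sum.inr (Sum.inl i)) : ℤ)) * v i) by
      rw [← Finset.sum_sub_distrib]
      exact Finset.sum_congr rfl fun i _ => by ring]
    omega
  have hLfg : L.FG := fg_of_sub_closed L hLsub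
  have hmap : dualLatMonoid σ = L.map φ := by
    ext u
    rw [dualLatMonoid_mem_iff s σ hσ u]
    constructor
    · intro h
      refine ⟨Sum.elim (fun i => (u i).toNat)
        (Sum.elim (fun i => (-(u i)).toNat) (fun vh => (∑ i, u i * vh.1 i).toNat)), ?_, ?_⟩
      · intro v hv
        simp only [Sum.elim_inl, Sum.elim_inr]
        have h1 : ∀ i, (((u i).toNat : ℤ) - ((-(u i)).toNat : ℤ)) = u i := fun i => by omega
        simp only [h1]
        rw [Int.toNat_of_nonneg (h v hv)]
      · funext i
        simp only [φ, AddMonoidHom.coe_mk, ZeroHom.coe_mk, Sum.elim_inl, Sum.elim_inr]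
        omega
    · rintro ⟨f, hf, rfl⟩ v hv
      have := hf v hv
      simp only [φ, AddMonoidHom.coe_mk, ZeroHom.coe_mk]
      rw [this]
      exact Int.natCast_nonneg _
  rw [hmap]
  exact hLfg.map φ
end
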